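/- Let H be a Hopf algebra and B an algebra. Given a convolution invertible linear map τ : H → B with τ(1)=1, the map α_r : B ⊗ H → B ⊗ H defined by α_r(a ⊗ h) = Σ τ(h₁)·a ⊗ h₂ is a right B-module automorphism of B ⊗ H (for the module structure (b ⊗ h)·a = ba ⊗ h) satisfying (α_r ⊗ id)∘(id ⊗ Δ) = (id ⊗ Δ)∘α_r and α_r(a ⊗ 1) = a ⊗ 1, where the inverse is given by (a ⊗ h) ↦ Σ τ'(h₁)·a ⊗ h₂ with τ' satisfying the twisted convolution inverse condition Σ τ'(h₂)τ(h₁) = Σ τ(h₂)τ'(h₁) = ε(h)1. -/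

import Mathlib

/-!
On `a ⊗ h` the gauge map is `(τ(-)·a ⊗ id) ∘ Δ`. By coassociativity, applying the gauge map of
`τ` and then that of `σ` gives `Σ σ(h₂)τ(h₁)·a ⊗ h₃`, i.e. the gauge map of the twisted
convolution `σ ⋆' τ`; by counitality the gauge map of `h ↦ ε(h)·1` is the identity. Hence a
twisted convolution inverse `τ'` gives a two-sided inverse. Right `B`-linearity holds since `a`
enters only through right multiplication, and compatibility with `id ⊗ Δ` is coassociativity
once more.
-/

open TensorProduct

variable {k : Type*} [Field k]
variable {H : Type*} [Ring H] [HopfAlgebra k H]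
variable {B : Type*} [Ring B] [Algebra k B]

/-- Convolution product of two linear maps `H →ₗ[k] B`. -/
noncomputable def conv (f g : H →ₗ[k] B) : H →ₗ[k] B :=
  LinearMap.mul' k B ∘ₗ TensorProduct.map f g ∘ₗ Coalgebra.comul

/-- Twisted convolution: `(f ⋆' g)(h) = Σ f(h₂)·g(h₁)`. -/
noncomputable def twistedConv (f g : H →ₗ[k] B) : H →ₗ[k] B :=
  LinearMap.mul' k B ∘ₗ TensorProduct.map f g ∘ₗ
    (TensorProduct.comm k H H).toLinearMap ∘ₗ Coalgebra.comul

/-- The unit of the convolution algebra: `h ↦ ε(h)·1`. -/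
noncomputable def convUnit : H →ₗ[k] B :=
  Algebra.linearMap k B ∘ₗ Coalgebra.counit

/-- The right gauge transformation on `B ⊗ H` associated to `τ : H → B`:
`a ⊗ h ↦ Σ τ(h₁)·a ⊗ h₂`. -/
noncomputable def gaugeMapR (τ : H →ₗ[k] B) : B ⊗[k] H →ₗ[k] B ⊗[k] H :=
  (TensorProduct.map (LinearMap.mul' k B ∘ₗ (TensorProduct.comm k B B).toLinearMap)
      LinearMap.id) ∘ₗ
    (TensorProduct.assoc k B B H).symm.toLinearMap ∘ₗ
    (TensorProduct.map LinearMap.id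
      ((TensorProduct.map τ LinearMap.id) ∘ₗ (Coalgebra.comul : H →ₗ[k] H ⊗[k] H)))

open LinearMap
open Coalgebra (comul coassoc_symm rTensor_counit_comp_comul)
open TensorProduct (assoc)

theorem TensorProduct.ext_comp_mk {R M N P : Type*} [CommSemiring R] [AddCommMonoid M]
    [AddCommMonoid N] [AddCommMonoid P] [Module R M] [Module R N] [Module R P]
    {f g : M ⊗[R] N →ₗ[R] P} (hfg : ∀ m : M, f ∘ₗ mk R M N m = g ∘ₗ mk R M N m) : f = g :=
  curry_injective (LinearMap.ext hfg)

theorem gaugeMapR_comp_mk (τ : H →ₗ[k] B) (a : B) :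
    gaugeMapR τ ∘ₗ mk k B H a = (mulRight k a ∘ₗ τ).rTensor H ∘ₗ comul := by
  have h : (mul' k B ∘ₗ (TensorProduct.comm k B B).toLinearMap).rTensor H ∘ₗ
      (assoc k B B H).symm.toLinearMap ∘ₗ mk k B (B ⊗[k] H) a ∘ₗ τ.rTensor H =
        (mulRight k a ∘ₗ τ).rTensor H := by
    ext; simp
  rw [← h]
  rfl

theorem gaugeMapR_comp_rTensor (σ f : H →ₗ[k] B) :
    gaugeMapR σ ∘ₗ f.rTensor H =
      (mul' k B ∘ₗ map σ f ∘ₗ (TensorProduct.comm k H H).toLinearMap).rTensor H ∘ₗ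
        (assoc k H H H).symm.toLinearMap ∘ₗ comul.lTensor H := by
  refine TensorProduct.ext_comp_mk fun p => ?_
  have h : (mul' k B ∘ₗ map σ f ∘ₗ (TensorProduct.comm k H H).toLinearMap).rTensor H ∘ₗ
      (assoc k H H H).symm.toLinearMap ∘ₗ mk k H (H ⊗[k] H) p =
        (mulRight k (f p) ∘ₗ σ).rTensor H := by
    ext; simp
  have hmk : f.rTensor H ∘ₗ mk k H H p = mk k B H (f p) := by
    ext; rfl
  rw [LinearMap.comp_assoc, hmk, gaugeMapR_comp_mk, ← h]
  rfl

theorem gaugeMapR_comp (σ τ : H →ₗ[k] B) :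
    gaugeMapR σ ∘ₗ gaugeMapR τ = gaugeMapR (twistedConv σ τ) := by
  refine TensorProduct.ext_comp_mk fun a => ?_
  have h : mul' k B ∘ₗ map σ (mulRight k a ∘ₗ τ) = mulRight k a ∘ₗ mul' k B ∘ₗ map σ τ := by
    ext; simp [mul_assoc]
  calc gaugeMapR σ ∘ₗ gaugeMapR τ ∘ₗ mk k B H a
      = gaugeMapR σ ∘ₗ (mulRight k a ∘ₗ τ).rTensor H ∘ₗ comul := by rw [gaugeMapR_comp_mk]
    _ = (mul' k B ∘ₗ map σ (mulRight k a ∘ₗ τ) ∘ₗ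
          (TensorProduct.comm k H H).toLinearMap).rTensor H ∘ₗ comul.rTensor H ∘ₗ comul := by
        rw [← coassoc_symm, ← LinearMap.comp_assoc, gaugeMapR_comp_rTensor]
        simp only [LinearMap.comp_assoc]
    _ = gaugeMapR (twistedConv σ τ) ∘ₗ mk k B H a := by
        rw [gaugeMapR_comp_mk, ← LinearMap.comp_assoc, ← rTensor_comp, twistedConv]
        simp only [← LinearMap.comp_assoc, h]

theorem gaugeMapR_convUnit : gaugeMapR (convUnit : H →ₗ[k] B) = LinearMap.id := by
  refine TensorProduct.ext_comp_mk fun a => ?_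
  rw [gaugeMapR_comp_mk, convUnit, ← LinearMap.comp_assoc, rTensor_comp, LinearMap.comp_assoc,
    rTensor_counit_comp_comul]
  ext; simp

theorem gaugeMapR_tmul_one (τ : H →ₗ[k] B) (hτ1 : τ 1 = 1) (a : B) :
    gaugeMapR τ (a ⊗ₜ[k] (1 : H)) = a ⊗ₜ[k] (1 : H) := by
  have h := congr($(gaugeMapR_comp_mk τ a) 1)
  simp only [LinearMap.comp_apply, mk_apply, Bialgebra.comul_one] at h
  rw [h, Algebra.TensorProduct.one_def]
  simp [hτ1]

theorem gaugeMapR_comp_rTensor_mulRight (τ : H →ₗ[k] B) (a : B) :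
    gaugeMapR τ ∘ₗ (mulRight k a).rTensor H = (mulRight k a).rTensor H ∘ₗ gaugeMapR τ := by
  refine TensorProduct.ext_comp_mk fun b => ?_
  have hmk : (mulRight k a).rTensor H ∘ₗ mk k B H b = mk k B H (b * a) := by
    ext; rfl
  rw [LinearMap.comp_assoc, hmk, gaugeMapR_comp_mk, LinearMap.comp_assoc, gaugeMapR_comp_mk,
    mulRight_mul, LinearMap.comp_assoc, rTensor_comp, LinearMap.comp_assoc]

theorem rTensor_gaugeMapR_comp_lTensor_comul (τ : H →ₗ[k] B) :
    (gaugeMapR τ).rTensor H ∘ₗ (assoc k B H H).symm.toLinearMap ∘ₗ (comul (R := k)).lTensor B =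
      (assoc k B H H).symm.toLinearMap ∘ₗ (comul (R := k)).lTensor B ∘ₗ gaugeMapR τ := by
  refine TensorProduct.ext_comp_mk fun a => ?_
  set W := mulRight k a ∘ₗ τ
  have hmk : (assoc k B H H).symm.toLinearMap ∘ₗ (comul (R := k)).lTensor B ∘ₗ mk k B H a =
      (mk k B H a).rTensor H ∘ₗ comul := by
    ext; rfl
  have hnat : (assoc k B H H).symm.toLinearMap ∘ₗ (comul (R := k)).lTensor B ∘ₗ W.rTensor H =
      (W.rTensor H).rTensor H ∘ₗ (assoc k H H H).symm.toLinearMap ∘ₗ comul.lTensor H := by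
    rw [lTensor_comp_rTensor, ← rTensor_comp_lTensor, ← LinearMap.comp_assoc,
      ← LinearMap.comp_assoc]
    congr 1
    ext; rfl
  calc _ = (gaugeMapR τ).rTensor H ∘ₗ (mk k B H a).rTensor H ∘ₗ comul := by
        simp only [LinearMap.comp_assoc, hmk]
    _ = (W.rTensor H).rTensor H ∘ₗ comul.rTensor H ∘ₗ comul := by
        rw [← LinearMap.comp_assoc, ← rTensor_comp, gaugeMapR_comp_mk, rTensor_comp,
          LinearMap.comp_assoc]
    _ = (W.rTensor H).rTensor H ∘ₗ (assoc k H H H).symm.toLinearMap ∘ₗ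
          comul.lTensor H ∘ₗ comul := by
        rw [← coassoc_symm]
    _ = (assoc k B H H).symm.toLinearMap ∘ₗ (comul (R := k)).lTensor B ∘ₗ
          W.rTensor H ∘ₗ comul := by
        simp only [← LinearMap.comp_assoc] at hnat ⊢
        rw [hnat]
    _ = _ := by
        rw [← gaugeMapR_comp_mk]
        simp only [LinearMap.comp_assoc]

theorem statement_3 (τ τ' : H →ₗ[k] B) (hτ1 : τ 1 = 1)
    (hinv : twistedConv τ' τ = (convUnit : H →ₗ[k] B) ∧
            twistedConv τ τ' = (convUnit : H →ₗ[k] B)) :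
    Function.Bijective (gaugeMapR τ) ∧
    (gaugeMapR τ' ∘ₗ gaugeMapR τ = LinearMap.id ∧
     gaugeMapR τ ∘ₗ gaugeMapR τ' = LinearMap.id) ∧
    (∀ (a : B) (z : B ⊗[k] H),
      gaugeMapR τ ((TensorProduct.map (LinearMap.mulRight k a) LinearMap.id) z)
        = (TensorProduct.map (LinearMap.mulRight k a) LinearMap.id) (gaugeMapR τ z)) ∧
    (TensorProduct.map (gaugeMapR τ) LinearMap.id) ∘ₗ
        (TensorProduct.assoc k B H H).symm.toLinearMap ∘ₗ
        (TensorProduct.map LinearMap.id (Coalgebra.comul : H →ₗ[k] H ⊗[k] H))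
      = (TensorProduct.assoc k B H H).symm.toLinearMap ∘ₗ
        (TensorProduct.map LinearMap.id (Coalgebra.comul : H →ₗ[k] H ⊗[k] H)) ∘ₗ
        gaugeMapR τ ∧
    (∀ a : B, gaugeMapR τ (a ⊗ₜ[k] (1 : H)) = a ⊗ₜ[k] (1 : H)) := by
  obtain ⟨hτ'τ, hττ'⟩ := hinv
  have hleft : gaugeMapR τ' ∘ₗ gaugeMapR τ = LinearMap.id := by
    rw [gaugeMapR_comp, hτ'τ, gaugeMapR_convUnit]
  have hright : gaugeMapR τ ∘ₗ gaugeMapR τ' = LinearMap.id := by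
    rw [gaugeMapR_comp, hττ', gaugeMapR_convUnit]
  exact ⟨Function.bijective_iff_has_inverse.mpr
      ⟨gaugeMapR τ', LinearMap.congr_fun hleft, LinearMap.congr_fun hright⟩, ⟨hleft, hright⟩,
    fun a => LinearMap.congr_fun (gaugeMapR_comp_rTensor_mulRight τ a),
    rTensor_gaugeMapR_comp_lTensor_comul τ, gaugeMapR_tmul_one τ hτ1⟩
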